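/- For all d ∈ ℕ and 0 < ε < 1, the set WA_d(ε) = {x ∈ ℝᵈ : L(x) ≤ ε} is β-BMS winning for β = (ε/3)^{d+1} ∈ (0, 1/2), where L is the Lagrange spectrum function. -/

import Mathlib

open Filter

/-!
Rational points of `ℝᵈ` are indexed by vectors `v : Fin d → ℚ`; writing `v = p/q` in
lowest terms, the denominator `q` is the lcm of the coordinate denominators, and the
liminf over `p/q ∈ ℚᵈ` (along any enumeration of `ℚᵈ`) is the liminf along the cofinite
filter on `Fin d → ℚ`.
-/

/-- The lowest-terms denominator `q` of a rational vector `p/q ∈ ℚᵈ`. -/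
def ratDen {d : ℕ} (v : Fin d → ℚ) : ℕ := Finset.univ.lcm fun i => (v i).den

def ratPt {d : ℕ} (v : Fin d → ℚ) : Fin d → ℝ := fun i => (v i : ℝ)

noncomputable def lagrange {d : ℕ} (x : Fin d → ℝ) : ℝ :=
  liminf (fun v : Fin d → ℚ =>
    (ratDen v : ℝ) ^ ((1 : ℝ) + 1 / d) * ‖x - ratPt v‖) cofinite

/-- The partial order on formal balls: `(x₂,r₂) ≤ₛ (x₁,r₁)` iff `r₂ + d(x₁,x₂) ≤ r₁`. -/
def SLeq {X : Type*} [MetricSpace X] (w₂ w₁ : X × ℝ) : Prop :=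
  w₂.2 + dist w₁.1 w₂.1 ≤ w₁.2

/-- Legality of Alice's `n`-th move in the `β`-BMS game: `ω'ₙ ≤ₛ ωₙ` and `r'ₙ = β rₙ`. -/
def BMSAliceLegal {X : Type*} [MetricSpace X] (β : ℝ) (bob alice : ℕ → X × ℝ) (n : ℕ) :
    Prop :=
  SLeq (alice n) (bob n) ∧ (alice n).2 = β * (bob n).2

def BMSBobLegal {X : Type*} [MetricSpace X] (bob alice : ℕ → X × ℝ) (n : ℕ) : Prop :=
  0 < (bob n).2 ∧ ∀ m, n = m + 1 → SLeq (bob n) (alice m)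

def BMSWinning {X : Type*} [MetricSpace X] (β : ℝ) (T : Set X) : Prop :=
  ∃ σ : List (X × ℝ) → X × ℝ,
    ∀ bob : ℕ → X × ℝ,
      (∀ n, (∀ m ≤ n, BMSBobLegal bob (fun k => σ ((List.range (k + 1)).map bob)) m) →
        BMSAliceLegal β bob (fun k => σ ((List.range (k + 1)).map bob)) n) ∧
      ((∀ n, BMSBobLegal bob (fun k => σ ((List.range (k + 1)).map bob)) n) →
        ((⋂ n, Metric.closedBall (bob n).1 (bob n).2) ∩ T).Nonempty)

/-!
Against Bob's ball `B(x, r)`, Alice applies Dirichlet's simultaneous approximation theorem with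
`N^{d+1} ≈ 1 / (ε^d r)`: there is `p/q` with `q ≤ N^d` and `‖x - p/q‖ ≤ 1/(Nq)`. If `p/q` lies
well inside `B(x, r)` she centres her ball of radius `β r` at `p/q`, where
`q^{1+1/d} ‖z - p/q‖ ≤ N^{d+1} β r ≤ ε`. Otherwise `‖x - p/q‖ ≥ (1 - β) r` forces `q ≤ (εN)^d`,
and she fits her ball inside `B(p/q, ‖x - p/q‖)`, where `q^{1+1/d} ‖z - p/q‖ ≤ q^{1/d}/N ≤ ε`.
The radii shrink geometrically, so the balls close down on a point `x∞`, and the rationals used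
along the way converge to `x∞` and witness `L(x∞) ≤ ε`.
-/

open Metric Set Topology

section RationalPoints

variable {d : ℕ}

noncomputable def approxQuality (v : Fin d → ℚ) (x : Fin d → ℝ) : ℝ :=
  (ratDen v : ℝ) ^ ((1 : ℝ) + 1 / d) * ‖x - ratPt v‖

theorem approxQuality_nonneg (v : Fin d → ℚ) (x : Fin d → ℝ) : 0 ≤ approxQuality v x := by
  unfold approxQuality; positivity

theorem ratDen_pos (v : Fin d → ℚ) : 0 < ratDen v :=
  Nat.pos_of_ne_zero fun h => by
    obtain ⟨i, -, hi⟩ := Finset.lcm_eq_zero_iff.1 h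
    exact (v i).den_nz hi

theorem den_le_ratDen (v : Fin d → ℚ) (i : Fin d) : (v i).den ≤ ratDen v :=
  Nat.le_of_dvd (ratDen_pos v) (Finset.dvd_lcm (Finset.mem_univ i))

theorem ratDen_dvd {v : Fin d → ℚ} {Q : ℕ} (h : ∀ i, (v i).den ∣ Q) : ratDen v ∣ Q :=
  Finset.lcm_dvd fun i _ => h i

theorem abs_ratPt_sub_le_norm (v : Fin d → ℚ) (x : Fin d → ℝ) (i : Fin d) :
    |(v i : ℝ) - x i| ≤ ‖ratPt v - x‖ :=
  norm_le_pi_norm (ratPt v - x) i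

theorem Rat.inv_den_le_abs {r : ℚ} (hr : r ≠ 0) : (r.den : ℝ)⁻¹ ≤ |(r : ℝ)| := by
  have hnum : (1 : ℝ) ≤ |(r.num : ℝ)| := by exact_mod_cast Int.one_le_abs (Rat.num_ne_zero.2 hr)
  rw [Rat.cast_def, abs_div, Nat.abs_cast, inv_eq_one_div]
  gcongr

theorem Rat.inv_den_mul_den_le_abs_sub {p q : ℚ} (h : p ≠ q) :
    ((p.den : ℝ) * q.den)⁻¹ ≤ |(p : ℝ) - q| := by
  have hdvd : (p - q).den ≤ p.den * q.den := Nat.le_of_dvd (by positivity) (Rat.sub_den_dvd p q)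
  calc ((p.den : ℝ) * q.den)⁻¹ ≤ ((p - q).den : ℝ)⁻¹ := by gcongr; exact_mod_cast hdvd
    _ ≤ |((p - q : ℚ) : ℝ)| := Rat.inv_den_le_abs (sub_ne_zero.2 h)
    _ = |(p : ℝ) - q| := by push_cast; rfl

theorem inv_ratDen_mul_ratDen_le_norm_sub {v w : Fin d → ℚ} (h : v ≠ w) :
    ((ratDen v : ℝ) * ratDen w)⁻¹ ≤ ‖ratPt v - ratPt w‖ := by
  obtain ⟨i, hi⟩ := Function.ne_iff.1 h
  calc ((ratDen v : ℝ) * ratDen w)⁻¹ ≤ (((v i).den : ℝ) * (w i).den)⁻¹ := by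
        gcongr <;> exact_mod_cast den_le_ratDen _ i
    _ ≤ |(v i : ℝ) - w i| := Rat.inv_den_mul_den_le_abs_sub hi
    _ ≤ ‖ratPt v - ratPt w‖ := abs_ratPt_sub_le_norm v (ratPt w) i

theorem Rat.finite_den_le_abs_sub_le (D M x : ℝ) :
    {c : ℚ | (c.den : ℝ) ≤ D ∧ |(c : ℝ) - x| ≤ M}.Finite := by
  have hfin : (closedBall (0 : ℤ) ((|x| + M) * D) ×ˢ Iic ⌊D⌋₊).Finite :=
    (isCompact_closedBall _ _).finite_of_discrete.prod (finite_Iic _)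
  refine (hfin.preimage (f := fun c : ℚ => (c.num, c.den)) fun a _ b _ h =>
    Rat.ext (congrArg Prod.fst h) (congrArg Prod.snd h)).subset ?_
  rintro c ⟨hden, hc⟩
  refine ⟨?_, Nat.le_floor hden⟩
  have hden0 : (0 : ℝ) < c.den := by exact_mod_cast c.pos
  have hcx : |(c : ℝ)| ≤ |x| + M := by
    have := abs_sub_abs_le_abs_sub (c : ℝ) x
    linarith
  rw [mem_closedBall, Int.dist_eq, Int.cast_zero, sub_zero]
  calc |(c.num : ℝ)| = |(c : ℝ)| * c.den := by
        rw [Rat.cast_def, abs_div, Nat.abs_cast, div_mul_cancel₀ _ hden0.ne']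
    _ ≤ (|x| + M) * D := mul_le_mul hcx hden hden0.le ((abs_nonneg _).trans hcx)

theorem finite_ratDen_le_norm_sub_le (D M : ℝ) (x : Fin d → ℝ) :
    {v : Fin d → ℚ | (ratDen v : ℝ) ≤ D ∧ ‖ratPt v - x‖ ≤ M}.Finite :=
  (Set.Finite.pi fun i => Rat.finite_den_le_abs_sub_le D M (x i)).subset
    fun v ⟨hD, hM⟩ i _ =>
      ⟨(Nat.cast_le.2 (den_le_ratDen v i)).trans hD, (abs_ratPt_sub_le_norm v x i).trans hM⟩

theorem Real.rpow_one_add_inv_le_mul_iff {q c : ℝ} {d : ℕ} (hd : d ≠ 0) (hq : 0 < q)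
    (hc : 0 ≤ c) : q ^ ((1 : ℝ) + 1 / d) ≤ q * c ↔ q ≤ c ^ d := by
  rw [Real.rpow_add hq, Real.rpow_one, mul_le_mul_iff_right₀ hq, one_div,
    Real.rpow_inv_le_iff_of_pos hq.le hc (by positivity), Real.rpow_natCast]

theorem tendsto_approxQuality_ratPt (hd : 0 < d) (w : Fin d → ℚ) :
    Tendsto (approxQuality · (ratPt w)) cofinite atTop := by
  refine tendsto_atTop.2 fun a => eventually_cofinite.2 ?_
  refine ((finite_ratDen_le_norm_sub_le ((a * ratDen w) ^ d) a (ratPt w)).insert w).subset ?_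
  intro v (hv : ¬ a ≤ approxQuality v (ratPt w))
  rw [not_le] at hv
  rcases eq_or_ne v w with rfl | hne
  · exact mem_insert _ _
  have hq : (0 : ℝ) < ratDen v := by exact_mod_cast ratDen_pos v
  have hqw : (0 : ℝ) < ratDen w := by exact_mod_cast ratDen_pos w
  have ha : 0 ≤ a := (approxQuality_nonneg v _).trans hv.le
  have hsep := inv_ratDen_mul_ratDen_le_norm_sub hne
  have hpow : 1 ≤ (ratDen v : ℝ) ^ ((1 : ℝ) + 1 / d) :=
    Real.one_le_rpow (by exact_mod_cast ratDen_pos v) (by positivity)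
  unfold approxQuality at hv
  rw [norm_sub_rev] at hv
  refine mem_insert_of_mem _ ⟨?_, ?_⟩
  · refine (Real.rpow_one_add_inv_le_mul_iff hd.ne' hq (by positivity)).1 ?_
    rw [inv_eq_one_div, div_le_iff₀ (by positivity)] at hsep
    calc (ratDen v : ℝ) ^ ((1 : ℝ) + 1 / d)
        ≤ (ratDen v : ℝ) ^ ((1 : ℝ) + 1 / d) * (‖ratPt v - ratPt w‖ * (ratDen v * ratDen w)) :=
          le_mul_of_one_le_right (by positivity) hsep
      _ ≤ a * (ratDen v * ratDen w) := by rw [← mul_assoc]; gcongr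
      _ = ratDen v * (a * ratDen w) := by ring
  · nlinarith [norm_nonneg (ratPt v - ratPt w)]

/-- At a rational point the approximation quality tends to `∞`, so the `liminf` defining
`lagrange` is not bounded above and takes the junk value `sSup univ = 0`. -/
theorem lagrange_ratPt (hd : 0 < d) (w : Fin d → ℚ) : lagrange (ratPt w) = 0 := by
  rw [lagrange, liminf_eq, ← Real.sSup_univ]
  exact congrArg sSup (eq_univ_of_forall (tendsto_atTop.1 (tendsto_approxQuality_ratPt hd w)))

theorem lagrange_le_of_mem_closure (hd : 0 < d) {ε : ℝ} (hε : 0 ≤ ε) {x : Fin d → ℝ}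
    (hx : x ∈ closure (ratPt '' {v | approxQuality v x ≤ ε})) : lagrange x ≤ ε := by
  by_cases hxQ : x ∈ range ratPt
  · obtain ⟨w, rfl⟩ := hxQ
    rw [lagrange_ratPt hd]
    exact hε
  have hinf : {v | approxQuality v x ≤ ε}.Infinite := fun hfin =>
    hxQ (image_subset_range _ _ ((hfin.image ratPt).isClosed.closure_subset hx))
  exact liminf_le_of_frequently_le (frequently_cofinite_iff_infinite.2 hinf)
    (isBoundedUnder_of ⟨0, fun v => approxQuality_nonneg v x⟩)

end RationalPoints

section Dirichlet

variable {d : ℕ}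

theorem exists_nat_int_abs_mul_sub_le (x : Fin d → ℝ) {N : ℕ} (hN : 0 < N) :
    ∃ Q : ℕ, 0 < Q ∧ Q ≤ N ^ d ∧ ∃ p : Fin d → ℤ, ∀ i, |Q * x i - p i| ≤ 1 / N := by
  have hN' : (0 : ℝ) < N := by exact_mod_cast hN
  let box (q : ℕ) (i : Fin d) : ℤ := ⌊Int.fract (q * x i) * N⌋
  have hbox : ∀ q ∈ Finset.range (N ^ d + 1),
      box q ∈ Fintype.piFinset fun _ => Finset.Ico (0 : ℤ) N := by
    refine fun q _ => Fintype.mem_piFinset.2 fun i => Finset.mem_Ico.2 ⟨?_, ?_⟩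
    · exact Int.floor_nonneg.2 (by have := Int.fract_nonneg (q * x i); positivity)
    · refine Int.floor_lt.2 ?_
      push_cast
      exact mul_lt_of_lt_one_left hN' (Int.fract_lt_one _)
  obtain ⟨a, ha, b, hb, hab, heq⟩ :=
    Finset.exists_ne_map_eq_of_card_lt_of_maps_to (by simp) hbox
  wlog hlt : a < b generalizing a b
  · exact this b hb a ha hab.symm heq.symm (hab.symm.lt_of_le (not_lt.1 hlt))
  refine ⟨b - a, by omega, by simp at hb; omega, fun i => ⌊b * x i⌋ - ⌊a * x i⌋, fun i => ?_⟩
  have hclose := Int.abs_sub_lt_one_of_floor_eq_floor (congrFun heq i).symm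
  rw [← sub_mul, abs_mul, abs_of_pos hN'] at hclose
  have hfract : ((b - a : ℕ) : ℝ) * x i - ((⌊b * x i⌋ - ⌊a * x i⌋ : ℤ) : ℝ)
      = Int.fract (b * x i) - Int.fract (a * x i) := by
    push_cast [Nat.cast_sub hlt.le, Int.fract]
    ring
  rw [hfract, le_div_iff₀ hN']
  exact hclose.le

theorem exists_ratDen_le_dist_le (x : Fin d → ℝ) {N : ℕ} (hN : 0 < N) :
    ∃ v : Fin d → ℚ, ratDen v ≤ N ^ d ∧ dist (ratPt v) x ≤ 1 / (N * ratDen v) := by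
  obtain ⟨Q, hQ, hQN, p, hp⟩ := exists_nat_int_abs_mul_sub_le x hN
  let v (i : Fin d) : ℚ := p i / Q
  have hvQ : ratDen v ≤ Q := Nat.le_of_dvd hQ (ratDen_dvd fun i => by
    have hvi : v i = Rat.divInt (p i) Q := by simp [v, Rat.divInt_eq_div]
    exact_mod_cast hvi ▸ Rat.den_dvd (p i) Q)
  have hQ' : (0 : ℝ) < Q := by exact_mod_cast hQ
  have hv : (0 : ℝ) < ratDen v := by exact_mod_cast ratDen_pos v
  refine ⟨v, hvQ.trans hQN, (dist_pi_le_iff (by positivity)).2 fun i => ?_⟩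
  calc dist (ratPt v i) (x i) = |Q * x i - p i| / Q := by
        rw [Real.dist_eq, abs_sub_comm, ← abs_of_pos hQ', ← abs_div, abs_of_pos hQ']
        simp only [ratPt, v]
        push_cast
        field_simp
    _ ≤ 1 / N / Q := by gcongr; exact hp i
    _ ≤ 1 / (N * ratDen v) := by
        rw [div_div]; gcongr

end Dirichlet

theorem exists_nat_pow_mem_Icc {t : ℝ} (ht : 1 ≤ t) {k : ℕ} (hk : k ≠ 0) :
    ∃ N : ℕ, 0 < N ∧ t ≤ N ^ k ∧ (N : ℝ) ^ k ≤ 2 ^ k * t := by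
  set u := t ^ (k⁻¹ : ℝ)
  have hu : 1 ≤ u := Real.one_le_rpow ht (by positivity)
  have huk : u ^ k = t := Real.rpow_inv_natCast_pow (by positivity) hk
  have hN : u ≤ ⌈u⌉₊ := Nat.le_ceil u
  refine ⟨⌈u⌉₊, Nat.ceil_pos.2 (by linarith), huk ▸ pow_le_pow_left₀ (by positivity) hN k, ?_⟩
  calc (⌈u⌉₊ : ℝ) ^ k ≤ (2 * u) ^ k := by
        gcongr; linarith [Nat.ceil_lt_add_one (zero_le_one.trans hu)]
    _ = 2 ^ k * t := by rw [mul_pow, huk]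

theorem exists_dist_eq_closedBall_subset {E : Type*} [NormedAddCommGroup E] [NormedSpace ℝ E]
    {x z : E} {a b : ℝ} (ha : 0 ≤ a) (hba : b ≤ a) (h : a < dist z x) :
    ∃ y, dist y x = a ∧ closedBall y b ⊆ closedBall z (dist z x) := by
  have hD : 0 < dist z x := ha.trans_lt h
  refine ⟨AffineMap.lineMap x z (a / dist z x), ?_, closedBall_subset_closedBall' ?_⟩
  · rw [dist_lineMap_left, Real.norm_eq_abs, abs_of_nonneg (by positivity), dist_comm x,
      div_mul_cancel₀ _ hD.ne']
  · have hc : 0 ≤ 1 - a / dist z x := by rw [sub_nonneg, div_le_one hD]; exact h.le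
    rw [dist_lineMap_right, Real.norm_eq_abs, abs_of_nonneg hc, dist_comm x, sub_mul, one_mul,
      div_mul_cancel₀ _ hD.ne']
    linarith

section GoodCenter

variable {d : ℕ} {ε : ℝ}

theorem div_three_pow_succ_le (hd : 0 < d) (hε : 0 ≤ ε) (hε1 : ε ≤ 1) :
    (ε / 3) ^ (d + 1) ≤ 1 / 9 :=
  calc (ε / 3) ^ (d + 1) ≤ (1 / 3) ^ (d + 1) := by gcongr
    _ ≤ (1 / 3) ^ 2 := pow_le_pow_of_le_one (by norm_num) (by norm_num) (by omega)
    _ = 1 / 9 := by norm_num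

theorem two_pow_mul_div_three_pow_le (hd : 0 < d) (hε : 0 ≤ ε) (hε1 : ε ≤ 1) :
    2 ^ (d + 1) * (ε / 3) ^ (d + 1) ≤ ε ^ (d + 1) * (1 - 2 * (ε / 3) ^ (d + 1)) := by
  have hβ := div_three_pow_succ_le hd hε hε1
  have h23 : ((2 : ℝ) / 3) ^ (d + 1) ≤ 4 / 9 :=
    calc ((2 : ℝ) / 3) ^ (d + 1) ≤ (2 / 3) ^ 2 :=
          pow_le_pow_of_le_one (by norm_num) (by norm_num) (by omega)
      _ = 4 / 9 := by norm_num
  calc 2 ^ (d + 1) * (ε / 3) ^ (d + 1) = ε ^ (d + 1) * (2 / 3) ^ (d + 1) := by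
        rw [← mul_pow, ← mul_pow]; ring_nf
    _ ≤ ε ^ (d + 1) * (1 - 2 * (ε / 3) ^ (d + 1)) := by gcongr; linarith

theorem exists_dirichlet_scale (hd : 0 < d) (hε : 0 < ε) (hε1 : ε < 1) {r : ℝ} (hr : 0 < r)
    (hr1 : r ≤ 1) :
    ∃ N : ℕ, 0 < N ∧ 1 ≤ ε ^ d * (1 - 2 * (ε / 3) ^ (d + 1)) * r * N ^ (d + 1) ∧
      (ε / 3) ^ (d + 1) * r * N ^ (d + 1) ≤ ε ∧ (1 / N : ℝ) ^ (d + 1) ≤ r := by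
  set β := (ε / 3) ^ (d + 1)
  have hβ : β ≤ 1 / 9 := div_three_pow_succ_le hd hε.le hε1.le
  have hkey : 2 ^ (d + 1) * β ≤ ε ^ (d + 1) * (1 - 2 * β) :=
    two_pow_mul_div_three_pow_le hd hε.le hε1.le
  have hβ0 : 0 ≤ β := by positivity
  have h2β : 0 < 1 - 2 * β := by linarith
  set s := ε ^ d * (1 - 2 * β) * r
  have hs : 0 < s := mul_pos (mul_pos (pow_pos hε d) h2β) hr
  have hsr : s ≤ r :=
    mul_le_of_le_one_left hr.le (mul_le_one₀ (pow_le_one₀ hε.le hε1.le) h2β.le (by linarith))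
  obtain ⟨N, hN, hlow, hhigh⟩ :=
    exists_nat_pow_mem_Icc ((one_le_inv₀ hs).2 (hsr.trans hr1)) (Nat.succ_ne_zero d)
  refine ⟨N, hN, ?_, ?_, ?_⟩
  · calc (1 : ℝ) = s * s⁻¹ := (mul_inv_cancel₀ hs.ne').symm
      _ ≤ s * N ^ (d + 1) := by gcongr
  · calc β * r * N ^ (d + 1) ≤ β * r * (2 ^ (d + 1) * s⁻¹) := by gcongr
      _ = 2 ^ (d + 1) * β / (ε ^ d * (1 - 2 * β)) := by simp only [s]; field_simp
      _ ≤ ε := by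
          rw [div_le_iff₀ (mul_pos (pow_pos hε d) h2β)]
          calc 2 ^ (d + 1) * β ≤ ε ^ (d + 1) * (1 - 2 * β) := hkey
            _ = ε * (ε ^ d * (1 - 2 * β)) := by ring
  · rw [div_pow, one_pow, one_div]
    exact ((inv_le_comm₀ hs (by positivity)).1 hlow).trans hsr

theorem approxQuality_le_of_ratDen_le_pow (hd : d ≠ 0) {v : Fin d → ℚ} {c : ℝ} (hc : 0 ≤ c)
    (hv : (ratDen v : ℝ) ≤ c ^ d) (z : Fin d → ℝ) :
    approxQuality v z ≤ ratDen v * c * dist z (ratPt v) := by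
  rw [approxQuality, dist_eq_norm]
  gcongr
  exact (Real.rpow_one_add_inv_le_mul_iff hd (by exact_mod_cast ratDen_pos v) hc).2 hv

theorem ratDen_le_of_lt_dist (hε : 0 < ε) {β r : ℝ} {N : ℕ} {v : Fin d → ℚ} {x : Fin d → ℝ}
    (hN : 0 < N) (hβ : 0 ≤ β) (hr : 0 < r) (hvx : dist (ratPt v) x ≤ 1 / (N * ratDen v))
    (hlow : 1 ≤ ε ^ d * (1 - 2 * β) * r * N ^ (d + 1)) (hfar : (1 - β) * r < dist (ratPt v) x) :
    (ratDen v : ℝ) ≤ (ε * N) ^ d := by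
  by_contra! hlarge
  have hnear : dist (ratPt v) x < (1 - β) * r :=
    calc dist (ratPt v) x ≤ 1 / (N * ratDen v) := hvx
      _ < 1 / (N * (ε * N) ^ d) := by gcongr
      _ ≤ (1 - 2 * β) * r := by
          rw [div_le_iff₀ (by positivity)]
          calc 1 ≤ ε ^ d * (1 - 2 * β) * r * N ^ (d + 1) := hlow
            _ = (1 - 2 * β) * r * (N * (ε * N) ^ d) := by ring
      _ ≤ (1 - β) * r := by nlinarith
  exact hnear.not_gt hfar

/-- The bound on `dist z (ratPt v)` makes the rationals used by Alice converge to the point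
the game closes down on. -/
def IsGoodCenter (β ε : ℝ) (x : Fin d → ℝ) (r : ℝ) (y : Fin d → ℝ) : Prop :=
  dist y x ≤ (1 - β) * r ∧ ∃ v : Fin d → ℚ, ∀ z ∈ closedBall y (β * r),
    approxQuality v z ≤ ε ∧ dist z (ratPt v) ^ (d + 1) ≤ r

theorem exists_isGoodCenter (hd : 0 < d) (hε : 0 < ε) (hε1 : ε < 1) (x : Fin d → ℝ) {r : ℝ}
    (hr : 0 < r) (hr1 : r ≤ 1) : ∃ y, IsGoodCenter ((ε / 3) ^ (d + 1)) ε x r y := by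
  obtain ⟨N, hN, hlow, hhigh, hNr⟩ := exists_dirichlet_scale hd hε hε1 hr hr1
  obtain ⟨v, hvN, hvx⟩ := exists_ratDen_le_dist_le x hN
  set β := (ε / 3) ^ (d + 1)
  have hβ : β ≤ 1 / 9 := div_three_pow_succ_le hd hε.le hε1.le
  have hβ0 : 0 ≤ β := by positivity
  have hN' : (0 : ℝ) < N := by exact_mod_cast hN
  have hq : (1 : ℝ) ≤ ratDen v := by exact_mod_cast ratDen_pos v
  have hvN' : (ratDen v : ℝ) ≤ N ^ d := by exact_mod_cast hvN
  have hvx' : dist (ratPt v) x ≤ 1 / N :=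
    hvx.trans (by gcongr; exact le_mul_of_one_le_right hN'.le hq)
  by_cases hnear : dist (ratPt v) x ≤ (1 - β) * r
  · refine ⟨ratPt v, hnear, v, fun z hz => ⟨?_, ?_⟩⟩
    · calc approxQuality v z ≤ ratDen v * N * dist z (ratPt v) :=
            approxQuality_le_of_ratDen_le_pow hd.ne' hN'.le hvN' z
        _ ≤ N ^ d * N * (β * r) := by gcongr; exact hz
        _ = β * r * N ^ (d + 1) := by ring
        _ ≤ ε := hhigh
    · have hzN : dist z (ratPt v) ≤ 1 / N := by
        rw [le_div_iff₀ hN']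
        calc dist z (ratPt v) * N ≤ β * r * N ^ (d + 1) := by
              gcongr
              · exact hz
              · exact le_self_pow₀ (by exact_mod_cast hN) (by omega)
          _ ≤ 1 := hhigh.trans hε1.le
      exact (pow_le_pow_left₀ dist_nonneg hzN _).trans hNr
  · rw [not_le] at hnear
    obtain ⟨y, hyx, hsub⟩ :=
      exists_dist_eq_closedBall_subset (b := β * r) (by nlinarith) (by nlinarith) hnear
    have hvε := ratDen_le_of_lt_dist hε hN hβ0 hr hvx hlow hnear
    refine ⟨y, hyx.le, v, fun z hz => ⟨?_, ?_⟩⟩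
    · calc approxQuality v z ≤ ratDen v * (ε * N) * dist z (ratPt v) :=
            approxQuality_le_of_ratDen_le_pow hd.ne' (by positivity) hvε z
        _ ≤ ratDen v * (ε * N) * (1 / (N * ratDen v)) := by gcongr; exact (hsub hz).trans hvx
        _ = ε := by field_simp
    · exact (pow_le_pow_left₀ dist_nonneg ((hsub hz).trans hvx') _).trans hNr

open Classical in
noncomputable def waMove (β ε : ℝ) (b : (Fin d → ℝ) × ℝ) : (Fin d → ℝ) × ℝ :=
  (if h : ∃ y, IsGoodCenter β ε b.1 b.2 y then h.choose else b.1, β * b.2)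

theorem waMove_sLeq {β : ℝ} (hβ : β ≤ 1) {b : (Fin d → ℝ) × ℝ} (hb : 0 ≤ b.2) :
    SLeq (waMove β ε b) b := by
  rw [SLeq, waMove]
  split_ifs with h
  · have := h.choose_spec.1
    rw [dist_comm] at this
    linarith
  · rw [dist_self]
    nlinarith

theorem isGoodCenter_waMove {β : ℝ} {b : (Fin d → ℝ) × ℝ} (h : ∃ y, IsGoodCenter β ε b.1 b.2 y) :
    IsGoodCenter β ε b.1 b.2 (waMove β ε b).1 := by
  rw [waMove, dif_pos h]
  exact h.choose_spec

end GoodCenter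

section Game

variable {X : Type*} [MetricSpace X]

theorem SLeq.closedBall_subset {w₂ w₁ : X × ℝ} (h : SLeq w₂ w₁) :
    closedBall w₂.1 w₂.2 ⊆ closedBall w₁.1 w₁.2 :=
  closedBall_subset_closedBall' (by rw [dist_comm]; exact h)

theorem SLeq.snd_le {w₂ w₁ : X × ℝ} (h : SLeq w₂ w₁) : w₂.2 ≤ w₁.2 := by
  unfold SLeq at h
  linarith [dist_nonneg (x := w₁.1) (y := w₂.1)]

theorem SLeq.trans {w₃ w₂ w₁ : X × ℝ} (h₃₂ : SLeq w₃ w₂) (h₂₁ : SLeq w₂ w₁) : SLeq w₃ w₁ := by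
  unfold SLeq at *
  linarith [dist_triangle w₁.1 w₂.1 w₃.1]

theorem nonempty_iInter_closedBall_of_sLeq [CompleteSpace X] {w : ℕ → X × ℝ}
    (hw : ∀ n, SLeq (w (n + 1)) (w n)) (hpos : ∀ n, 0 ≤ (w n).2)
    (hlim : Tendsto (fun n => (w n).2) atTop (𝓝 0)) :
    (⋂ n, closedBall (w n).1 (w n).2).Nonempty := by
  have hanti : Antitone fun n => closedBall (w n).1 (w n).2 :=
    antitone_nat_of_succ_le fun n => (hw n).closedBall_subset
  refine nonempty_iInter_of_nonempty_biInter (fun _ => isClosed_closedBall)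
    (fun _ => isBounded_closedBall)
    (fun N => ⟨(w N).1, mem_iInter₂.2 fun n hn => hanti hn (mem_closedBall_self (hpos N))⟩) ?_
  refine squeeze_zero (fun _ => diam_nonneg) (fun n => diam_closedBall (hpos n)) ?_
  simpa using hlim.const_mul 2

theorem bmsWinning_of_move [CompleteSpace X] [Nonempty X] {β : ℝ} (hβ0 : 0 ≤ β) (hβ1 : β < 1)
    {T : Set X} (move : X × ℝ → X × ℝ)
    (hmove : ∀ b : X × ℝ, 0 < b.2 → SLeq (move b) b ∧ (move b).2 = β * b.2)
    (hT : ∀ x, (∀ δ > 0, ∃ b : X × ℝ, 0 < b.2 ∧ b.2 < δ ∧ x ∈ closedBall (move b).1 (move b).2) →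
      x ∈ T) :
    BMSWinning β T := by
  refine ⟨fun l => move (l.getLastD (Classical.arbitrary _)), fun bob => ?_⟩
  have hlast (k : ℕ) :
      ((List.range (k + 1)).map bob).getLastD (Classical.arbitrary _) = bob k := by
    simp [List.range_succ]
  simp only [hlast]
  refine ⟨fun n hn => hmove _ (hn n le_rfl).1, fun hlegal => ?_⟩
  have hpos (n : ℕ) : 0 < (bob n).2 := (hlegal n).1
  have hnext (n : ℕ) : SLeq (bob (n + 1)) (move (bob n)) := (hlegal (n + 1)).2 n rfl
  have hshrink (n : ℕ) : (bob (n + 1)).2 ≤ β * (bob n).2 :=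
    (hmove _ (hpos n)).2 ▸ (hnext n).snd_le
  have hlim : Tendsto (fun n => (bob n).2) atTop (𝓝 0) :=
    squeeze_zero (fun n => (hpos n).le)
      (fun n => le_geom (u := fun n => (bob n).2) hβ0 n fun k _ => hshrink k)
      (by simpa using (tendsto_pow_atTop_nhds_zero_of_lt_one hβ0 hβ1).mul_const (bob 0).2)
  obtain ⟨x, hx⟩ := nonempty_iInter_closedBall_of_sLeq
    (fun n => (hnext n).trans (hmove _ (hpos n)).1) (fun n => (hpos n).le) hlim
  refine ⟨x, hx, hT x fun δ hδ => ?_⟩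
  obtain ⟨n, hn⟩ := (hlim.eventually (gt_mem_nhds hδ)).exists
  exact ⟨bob n, hpos n, hn, (hnext n).closedBall_subset (mem_iInter.1 hx (n + 1))⟩

end Game

/-- **Theorem.** For all `d ≥ 1` and `0 < ε < 1`, the set
`WA_d(ε) = {x ∈ ℝᵈ : L(x) ≤ ε}` is `β`-BMS winning, where
`β = (ε/3)^{d+1} ∈ (0, 1/2)`. -/
theorem wa_set_bms_winning (d : ℕ) (hd : 0 < d) (ε : ℝ) (hε : 0 < ε) (hε1 : ε < 1) :
    (ε / 3) ^ (d + 1) ∈ Set.Ioo (0 : ℝ) (1 / 2) ∧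
      BMSWinning ((ε / 3) ^ (d + 1)) {x : Fin d → ℝ | lagrange x ≤ ε} := by
  have hβ : (ε / 3) ^ (d + 1) ∈ Ioo (0 : ℝ) (1 / 2) :=
    ⟨by positivity, (div_three_pow_succ_le hd hε.le hε1.le).trans_lt (by norm_num)⟩
  have hβ1 : (ε / 3) ^ (d + 1) < 1 := hβ.2.trans (by norm_num)
  refine ⟨hβ, bmsWinning_of_move hβ.1.le hβ1 (waMove _ ε)
    (fun b hb => ⟨waMove_sLeq hβ1.le hb.le, rfl⟩) fun x hx => ?_⟩
  refine lagrange_le_of_mem_closure hd hε.le (Metric.mem_closure_iff.2 fun δ hδ => ?_)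
  obtain ⟨b, hb, hbδ, hxb⟩ := hx (min 1 (δ ^ (d + 1))) (by positivity)
  obtain ⟨v, hv⟩ := (isGoodCenter_waMove
    (exists_isGoodCenter hd hε hε1 b.1 hb (hbδ.le.trans (min_le_left _ _)))).2
  obtain ⟨hvx, hdist⟩ := hv x hxb
  refine ⟨ratPt v, ⟨v, hvx, rfl⟩, ?_⟩
  exact lt_of_pow_lt_pow_left₀ (d + 1) hδ.le (hdist.trans_lt (hbδ.trans_le (min_le_right _ _)))
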